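/- arXiv:math/0701702 — 8 statements merged into one kernel-verified Lean document; each statement's English description precedes it below -/
import Mathlib

section
/- Let $\widehat c_1, \widehat c_2 \in \widehat X$ be roots of $\eta$ (i.e. $\eta(\widehat c_1) = \eta(\widehat c_2) = eK$) and suppose there is a path $\widehat\gamma$ in $\widehat X$ from $\widehat c_1$ to $\widehat c_2$ such that the loop $\eta \circ \widehat\gamma$ is homotopic relative to endpoints to the constant path at $eK$. Then, writing $c_i = q(\widehat c_i)$, we have $f(c_1) = h(c_1)$ and $f(c_2) = h(c_2)$, and there exists a path $\gamma$ in $X$ from $c_1$ to $c_2$ such that the paths $f \circ \gamma$ and $h \circ \gamma$ are homotopic relative to endpoints. -/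
open unitInterval

/-- If `ĉ₁, ĉ₂ ∈ X̂` are roots of `η` (i.e. `η ĉ₁ = η ĉ₂ = eK`) and there is a
path `γ̂` in `X̂` from `ĉ₁` to `ĉ₂` such that `η ∘ γ̂` is homotopic rel endpoints to the
constant path at `eK`, then the projections `cᵢ = q ĉᵢ` are coincidences of `(f, h)` and there
is a path `γ` in `X` from `c₁` to `c₂` with `f ∘ γ` homotopic to `h ∘ γ` rel endpoints. -/
theorem roots_nielsen_equiv_implies_coincidences_nielsen_equiv
    {X : Type*} [TopologicalSpace X]
    {G : Type*} [Group G] [TopologicalSpace G] [IsTopologicalGroup G]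
    (K : Subgroup G) (hK : IsClosed (K : Set G))
    (f h : C(X, G ⧸ K))
    (η : C({p : X × G // f p.1 = QuotientGroup.mk p.2}, G ⧸ K))
    (hη : ∀ p, η p = (p.1.2)⁻¹ • h p.1.1)
    (c1hat c2hat : {p : X × G // f p.1 = QuotientGroup.mk p.2})
    (hroot1 : η c1hat = QuotientGroup.mk (1 : G))
    (hroot2 : η c2hat = QuotientGroup.mk (1 : G))
    (γhat : C(unitInterval, {p : X × G // f p.1 = QuotientGroup.mk p.2}))
    (hγ0 : γhat 0 = c1hat) (hγ1 : γhat 1 = c2hat)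
    (hloop : (η.comp γhat).HomotopicRel
      (ContinuousMap.const unitInterval (QuotientGroup.mk (1 : G))) {0, 1}) :
    f c1hat.1.1 = h c1hat.1.1 ∧ f c2hat.1.1 = h c2hat.1.1 ∧
      ∃ γ : C(unitInterval, X), γ 0 = c1hat.1.1 ∧ γ 1 = c2hat.1.1 ∧
        (f.comp γ).HomotopicRel (h.comp γ) {0, 1} := by

  -- key pointwise identities
  have key : ∀ p : {p : X × G // f p.1 = QuotientGroup.mk p.2},
      h p.1.1 = p.1.2 • η p := by
    intro p
    rw [hη, smul_smul, mul_inv_cancel, one_smul]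
  have hf : ∀ p : {p : X × G // f p.1 = QuotientGroup.mk p.2},
      f p.1.1 = p.1.2 • (QuotientGroup.mk (1 : G) : G ⧸ K) := by
    intro p
    rw [p.2]
    show (QuotientGroup.mk p.1.2 : G ⧸ K) = _
    rw [MulAction.Quotient.smul_mk, smul_eq_mul, mul_one]
  have coin : ∀ p, η p = QuotientGroup.mk (1 : G) → f p.1.1 = h p.1.1 := by
    intro p hp
    rw [key p, hp, hf p]
  refine ⟨coin _ hroot1, coin _ hroot2, ?_⟩
  obtain ⟨H⟩ := hloop
  set γ : C(unitInterval, X) :=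
    ⟨fun t => (γhat t).1.1,
      (continuous_fst.comp continuous_subtype_val).comp γhat.continuous⟩ with hγ
  refine ⟨γ, by simp [hγ, hγ0], by simp [hγ, hγ1], ?_⟩
  have hrel : (h.comp γ).HomotopicRel (f.comp γ) {0, 1} := by
    refine ⟨⟨⟨⟨fun p => (γhat p.2).1.2 • H p, ?_⟩, ?_, ?_⟩, ?_⟩⟩
    · exact (continuous_smul.comp
        (((continuous_snd.comp continuous_subtype_val).comp
          (γhat.continuous.comp continuous_snd)).prodMk H.continuous))
    · intro t
      simp only [ContinuousMap.coe_mk, ContinuousMap.comp_apply, H.apply_zero, hγ]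
      exact (key (γhat t)).symm
    · intro t
      simp only [ContinuousMap.coe_mk, ContinuousMap.comp_apply, H.apply_one,
        ContinuousMap.const_apply, hγ]
      exact (hf (γhat t)).symm
    · intro t x hx
      simp only [ContinuousMap.coe_mk, ContinuousMap.comp_apply, H.eq_fst t hx, hγ]
      exact (key (γhat x)).symm
  exact hrel.symm
end

section
/- Let $c_1, c_2 \in \mathrm{Coin}(f,h)$ and let $\gamma$ be a path in $X$ from $c_1$ to $c_2$ such that $f \circ \gamma$ and $h \circ \gamma$ are homotopic relative to endpoints. Then for any path $\widehat\gamma$ in $\widehat X$ lifting $\gamma$ (i.e. satisfying $q(\widehat\gamma(t)) = \gamma(t)$ for all $t$), the loop $\eta \circ \widehat\gamma$ is a loop at $eK$ and is homotopic relative to endpoints to the constant path at $eK$; in particular $\widehat\gamma(0)$ and $\widehat\gamma(1)$ are Nielsen equivalent as roots of $\eta$. -/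
open unitInterval

/-- If `c₁, c₂` are Nielsen-equivalent coincidences of `(f, h)` via a path `γ`
(i.e. `f ∘ γ` is homotopic to `h ∘ γ` rel endpoints), then for any lift `γ̂` of `γ` to `X̂`,
the loop `η ∘ γ̂` is a loop at `eK` and is homotopic rel endpoints to the constant path at
`eK`; in particular `γ̂ 0` and `γ̂ 1` are Nielsen equivalent as roots of `η`. -/
theorem coincidences_nielsen_equiv_implies_lifted_roots_nielsen_equiv
    {X : Type*} [TopologicalSpace X]
    {G : Type*} [Group G] [TopologicalSpace G] [IsTopologicalGroup G]
    (K : Subgroup G) (hK : IsClosed (K : Set G))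
    (f h : C(X, G ⧸ K))
    (η : C({p : X × G // f p.1 = QuotientGroup.mk p.2}, G ⧸ K))
    (hη : ∀ p, η p = (p.1.2)⁻¹ • h p.1.1)
    (c1 c2 : X) (hc1 : f c1 = h c1) (hc2 : f c2 = h c2)
    (γ : C(unitInterval, X)) (hγ0 : γ 0 = c1) (hγ1 : γ 1 = c2)
    (hNielsen : (f.comp γ).HomotopicRel (h.comp γ) {0, 1})
    (γhat : C(unitInterval, {p : X × G // f p.1 = QuotientGroup.mk p.2}))
    (hlift : ∀ t, (γhat t).1.1 = γ t) :
    η (γhat 0) = QuotientGroup.mk (1 : G) ∧ η (γhat 1) = QuotientGroup.mk (1 : G) ∧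
      (η.comp γhat).HomotopicRel
        (ContinuousMap.const unitInterval (QuotientGroup.mk (1 : G))) {0, 1} := by
  -- key fact : for each t, f (γ t) = mk (g t)
  have hfγ : ∀ t : unitInterval, f (γ t) = QuotientGroup.mk ((γhat t).1.2) := by
    intro t
    rw [← hlift t]
    exact (γhat t).2
  have key : ∀ t : unitInterval, ((γhat t).1.2)⁻¹ • f (γ t) =
      (QuotientGroup.mk (1 : G) : G ⧸ K) := by
    intro t
    rw [hfγ t]
    show (QuotientGroup.mk (((γhat t).1.2)⁻¹ * (γhat t).1.2) : G ⧸ K) = _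
    rw [inv_mul_cancel]
  have hend : ∀ t : unitInterval, f (γ t) = h (γ t) → η (γhat t) = QuotientGroup.mk (1 : G) := by
    intro t ht
    rw [hη, hlift t, ← ht]
    exact key t
  refine ⟨hend 0 (by rw [hγ0]; exact hc1), hend 1 (by rw [hγ1]; exact hc2), ?_⟩
  obtain ⟨H⟩ := hNielsen
  -- continuity of t ↦ (γhat t).1.2
  have hg : Continuous fun t : unitInterval => ((γhat t).1.2)⁻¹ :=
    (continuous_snd.comp (continuous_subtype_val.comp γhat.continuous)).inv
  refine ⟨ContinuousMap.HomotopyRel.symm ?_⟩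
  exact
    { toFun := fun st => ((γhat st.2).1.2)⁻¹ • H st
      continuous_toFun := (hg.comp continuous_snd).smul H.continuous
      map_zero_left := by
        intro t
        show ((γhat t).1.2)⁻¹ • H (0, t) = _
        rw [H.apply_zero]
        exact key t
      map_one_left := by
        intro t
        show ((γhat t).1.2)⁻¹ • H (1, t) = _
        rw [H.apply_one]
        show ((γhat t).1.2)⁻¹ • h (γ t) = η (γhat t)
        rw [hη, hlift t]
      prop' := by
        intro s t ht
        show ((γhat t).1.2)⁻¹ • H (s, t) = _
        rw [H.eq_fst s ht]
        exact key t }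
end

section
/- Suppose there is a continuous $K$-equivariant homotopy $\widehat{\mathcal F} : \widehat X \times [0,1] \to G/K$ such that $\widehat{\mathcal F}(\widehat x, 0) = \eta(\widehat x)$ for all $\widehat x$ and $\widehat{\mathcal F}(\widehat x, 1) \neq eK$ for all $\widehat x \in \widehat X$. Then there exists a continuous map $h' : X \to G/K$ homotopic to $h$ such that $f(x) \neq h'(x)$ for all $x \in X$, i.e. $\mathrm{Coin}(f,h') = \emptyset$. -/
open unitInterval

/-- If there is a continuous `K`-equivariant homotopy
`F̂ : X̂ × [0,1] → G/K` with `F̂ (x̂, 0) = η x̂` for all `x̂` and `F̂ (x̂, 1) ≠ eK` for all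
`x̂`, then there is a continuous map `h' : X → G/K` homotopic to `h` with
`Coin (f, h') = ∅`. -/
theorem root_free_equivariant_homotopy_gives_coincidence_free
    {X : Type*} [TopologicalSpace X]
    {G : Type*} [Group G] [TopologicalSpace G] [IsTopologicalGroup G]
    (K : Subgroup G) (hK : IsClosed (K : Set G))
    (f h : C(X, G ⧸ K))
    (η : C({p : X × G // f p.1 = QuotientGroup.mk p.2}, G ⧸ K))
    (hη : ∀ p, η p = (p.1.2)⁻¹ • h p.1.1)
    (Fhat : {p : X × G // f p.1 = QuotientGroup.mk p.2} × unitInterval → G ⧸ K)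
    (hcont : Continuous Fhat)
    (hequiv : ∀ (k : K) (xhat xhat' : {p : X × G // f p.1 = QuotientGroup.mk p.2}),
      xhat'.1.1 = xhat.1.1 → xhat'.1.2 = xhat.1.2 * (k : G)⁻¹ →
      ∀ t : unitInterval, Fhat (xhat', t) = (k : G) • Fhat (xhat, t))
    (hF0 : ∀ xhat, Fhat (xhat, 0) = η xhat)
    (hF1 : ∀ xhat, Fhat (xhat, 1) ≠ QuotientGroup.mk (1 : G)) :
    ∃ h' : C(X, G ⧸ K), h.Homotopic h' ∧ ∀ x, f x ≠ h' x := by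
  classical
  -- a set-theoretic section
  have hsec : ∀ x : X, f x = QuotientGroup.mk (Quotient.out (f x)) := fun x =>
    (QuotientGroup.out_eq' (f x)).symm
  let H : X × unitInterval → G ⧸ K := fun xt =>
    Quotient.out (f xt.1) • Fhat (⟨(xt.1, Quotient.out (f xt.1)), hsec xt.1⟩, xt.2)
  -- well-definedness: any lift gives the same value
  have key : ∀ (x : X) (g : G) (hg : f x = QuotientGroup.mk g) (t : unitInterval),
      g • Fhat (⟨(x, g), hg⟩, t) = H (x, t) := by
    intro x g hg t
    have hk : g⁻¹ * Quotient.out (f x) ∈ K := by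
      apply QuotientGroup.eq.mp
      rw [← hg, ← hsec x]
    have heq := hequiv ⟨g⁻¹ * Quotient.out (f x), hk⟩ ⟨(x, Quotient.out (f x)), hsec x⟩
      ⟨(x, g), hg⟩ rfl (by simp [mul_inv_rev]) t
    show g • Fhat (⟨(x, g), hg⟩, t) = _
    rw [heq, smul_smul]
    show (g * (g⁻¹ * Quotient.out (f x))) • _ = _
    rw [mul_inv_cancel_left]
  -- the projection Xhat → X is an open surjective map
  have hqsurj : Function.Surjective
      (fun s : {p : X × G // f p.1 = QuotientGroup.mk p.2} => s.1.1) := by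
    intro x; exact ⟨⟨(x, Quotient.out (f x)), hsec x⟩, rfl⟩
  have hqcont : Continuous
      (fun s : {p : X × G // f p.1 = QuotientGroup.mk p.2} => s.1.1) :=
    (continuous_fst.comp continuous_subtype_val)
  have hqopen : IsOpenMap
      (fun s : {p : X × G // f p.1 = QuotientGroup.mk p.2} => s.1.1) := by
    intro U hU
    rw [isOpen_iff_mem_nhds]
    rintro x ⟨⟨⟨x', g⟩, hg⟩, hmemU, rfl⟩
    rcases isOpen_induced_iff.mp hU with ⟨V, hV, rfl⟩
    rcases isOpen_prod_iff.mp hV x' g hmemU with ⟨A, B, hA, hB, hxA, hgB, hAB⟩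
    have hopen : IsOpen (A ∩ f ⁻¹' (QuotientGroup.mk '' B)) :=
      hA.inter (f.continuous.isOpen_preimage _ (QuotientGroup.isOpenMap_coe B hB))
    refine Filter.mem_of_superset (hopen.mem_nhds ⟨hxA, g, hgB, hg.symm⟩) ?_
    rintro y ⟨hyA, g', hg'B, hg'⟩
    exact ⟨⟨⟨y, g'⟩, hg'.symm⟩, hAB (Set.mk_mem_prod hyA hg'B), rfl⟩
  have hquot : Topology.IsQuotientMap
      (fun st : {p : X × G // f p.1 = QuotientGroup.mk p.2} × unitInterval =>
        ((st.1.1.1, st.2) : X × unitInterval)) := by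
    have homap : IsOpenMap (Prod.map
        (fun s : {p : X × G // f p.1 = QuotientGroup.mk p.2} => s.1.1)
        (id : unitInterval → unitInterval)) :=
      hqopen.prodMap IsOpenMap.id
    exact homap.isQuotientMap (hqcont.prodMap continuous_id)
      (hqsurj.prodMap Function.surjective_id)
  -- continuity of H
  have hHcont : Continuous H := by
    rw [hquot.continuous_iff]
    have hcomp : (H ∘ fun st : {p : X × G // f p.1 = QuotientGroup.mk p.2} × unitInterval =>
        ((st.1.1.1, st.2) : X × unitInterval)) =
        fun st => st.1.1.2 • Fhat st := by
      funext st
      rcases st with ⟨⟨⟨x, g⟩, hg⟩, t⟩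
      exact (key x g hg t).symm
    rw [hcomp]
    exact ((continuous_snd.comp continuous_subtype_val).comp continuous_fst).smul hcont
  -- H at time 0 is h
  have hH0 : ∀ x, H (x, 0) = h x := by
    intro x
    show Quotient.out (f x) • Fhat (⟨(x, Quotient.out (f x)), hsec x⟩, 0) = h x
    rw [hF0, hη, smul_smul]
    show (Quotient.out (f x) * (Quotient.out (f x))⁻¹) • _ = _
    rw [mul_inv_cancel, one_smul]
  refine ⟨⟨fun x => H (x, 1), hHcont.comp (Continuous.prodMk continuous_id continuous_const)⟩,
    ⟨⟨⟨fun tx => H (tx.2, tx.1), hHcont.comp (continuous_snd.prodMk continuous_fst)⟩,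
      fun x => hH0 x, fun x => rfl⟩⟩, ?_⟩
  intro x hx
  apply hF1 ⟨(x, Quotient.out (f x)), hsec x⟩
  have hthis : f x = Quotient.out (f x) • Fhat (⟨(x, Quotient.out (f x)), hsec x⟩, 1) := hx
  have h2 : (Quotient.out (f x)) • (QuotientGroup.mk (1 : G) : G ⧸ K)
      = Quotient.out (f x) • Fhat (⟨(x, Quotient.out (f x)), hsec x⟩, 1) := by
    rw [← hthis]
    show QuotientGroup.mk (Quotient.out (f x) * 1) = f x
    rw [mul_one, ← hsec x]
  exact (MulAction.injective (Quotient.out (f x)) h2).symm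
end

section
/- There exists a continuous map $h' : X \to G/K$ homotopic to $h$ with $\mathrm{Coin}(f,h') = \emptyset$ if and only if there exists a continuous $K$-equivariant homotopy $\widehat{\mathcal F} : \widehat X \times [0,1] \to G/K$ with $\widehat{\mathcal F}(\widehat x, 0) = \eta(\widehat x)$ for all $\widehat x$ and $\widehat{\mathcal F}(\widehat x, 1) \neq eK$ for all $\widehat x \in \widehat X$ (i.e. the map $\eta$ can be made root free by a $K$-homotopy). -/
open unitInterval Topology

theorem aux_isOpenMap_q
    {X : Type*} [TopologicalSpace X]
    {G : Type*} [Group G] [TopologicalSpace G] [IsTopologicalGroup G]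
    (K : Subgroup G) (f : C(X, G ⧸ K)) :
    IsOpenMap (fun p : {p : X × G // f p.1 = QuotientGroup.mk p.2} => p.1.1) := by
  intro U hU
  rw [isOpen_induced_iff] at hU
  obtain ⟨T, hT, rfl⟩ := hU
  rw [isOpen_iff_forall_mem_open]
  rintro x ⟨⟨⟨x', g⟩, hfg⟩, hmem, rfl⟩
  obtain ⟨V, W, hV, hW, hxV, hgW, hVW⟩ := isOpen_prod_iff.mp hT _ _ hmem
  refine ⟨V ∩ f ⁻¹' (QuotientGroup.mk '' W), ?_, ?_, hxV, ⟨g, hgW, hfg.symm⟩⟩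
  · rintro y ⟨hyV, g', hg'W, hyg'⟩
    exact ⟨⟨⟨y, g'⟩, hyg'.symm⟩, hVW ⟨hyV, hg'W⟩, rfl⟩
  · exact IsOpen.inter hV (f.continuous.isOpen_preimage _
      (QuotientGroup.isOpenMap_coe W hW))

/-- There is a continuous map `h' : X → G/K` homotopic to `h` with
`Coin (f, h') = ∅` iff the map `η : X̂ → G/K` can be made root free by a `K`-equivariant
homotopy, i.e. iff there is a continuous `K`-equivariant `F̂ : X̂ × [0,1] → G/K` with
`F̂ (x̂, 0) = η x̂` for all `x̂` and `F̂ (x̂, 1) ≠ eK` for all `x̂`. -/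
theorem coincidence_free_iff_equivariant_root_free
    {X : Type*} [TopologicalSpace X]
    {G : Type*} [Group G] [TopologicalSpace G] [IsTopologicalGroup G]
    (K : Subgroup G) (hK : IsClosed (K : Set G))
    (f h : C(X, G ⧸ K))
    (η : C({p : X × G // f p.1 = QuotientGroup.mk p.2}, G ⧸ K))
    (hη : ∀ p, η p = (p.1.2)⁻¹ • h p.1.1) :
    (∃ h' : C(X, G ⧸ K), h.Homotopic h' ∧ ∀ x, f x ≠ h' x) ↔
    (∃ Fhat : {p : X × G // f p.1 = QuotientGroup.mk p.2} × unitInterval → G ⧸ K,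
      Continuous Fhat ∧
      (∀ (k : K) (xhat xhat' : {p : X × G // f p.1 = QuotientGroup.mk p.2}),
        xhat'.1.1 = xhat.1.1 → xhat'.1.2 = xhat.1.2 * (k : G)⁻¹ →
        ∀ t : unitInterval, Fhat (xhat', t) = (k : G) • Fhat (xhat, t)) ∧
      (∀ xhat, Fhat (xhat, 0) = η xhat) ∧
      (∀ xhat, Fhat (xhat, 1) ≠ QuotientGroup.mk (1 : G))) := by
  constructor
  · rintro ⟨h', ⟨H⟩, hfree⟩
    refine ⟨fun p => (p.1.1.2)⁻¹ • H (p.2, p.1.1.1), ?_, ?_, ?_, ?_⟩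
    · exact (((continuous_subtype_val.comp continuous_fst).snd.inv).smul
        (H.continuous.comp (continuous_snd.prodMk
          ((continuous_subtype_val.comp continuous_fst).fst))))
    · rintro k ⟨⟨x, g⟩, hx⟩ ⟨⟨x', g'⟩, hx'⟩ h1 h2 t
      simp only at h1 h2
      subst h1 h2
      simp [mul_inv_rev, mul_smul]
    · intro xhat
      simp [hη, H.apply_zero]
    · rintro ⟨⟨x, g⟩, hx⟩ hcon
      simp only [H.apply_one] at hcon
      apply hfree x
      rw [hx]
      calc (QuotientGroup.mk g : G ⧸ K) = g • (QuotientGroup.mk (1:G)) := by simp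
        _ = g • (g⁻¹ • h' x) := by rw [hcon]
        _ = h' x := by rw [smul_smul]; simp
  · rintro ⟨Fhat, hcont, hequiv, h0, h1⟩
    -- well-definedness
    have hwd : ∀ (x : X) (g g' : G) (hg : f x = QuotientGroup.mk g)
        (hg' : f x = QuotientGroup.mk g') (t : unitInterval),
        g • Fhat (⟨(x, g), hg⟩, t) = g' • Fhat (⟨(x, g'), hg'⟩, t) := by
      intro x g g' hg hg' t
      have hk : g⁻¹ * g' ∈ K := QuotientGroup.eq.mp (hg.symm.trans hg')
      have := hequiv ⟨g⁻¹ * g', hk⟩ ⟨(x, g'), hg'⟩ ⟨(x, g), hg⟩ rfl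
        (by simp only [mul_inv_rev, inv_inv]; group) t
      rw [this, smul_smul]
      congr 1
      group
    -- the map H : X × I → G ⧸ K
    set gg : X → G := fun x => Quotient.out (f x) with hgg
    have hggp : ∀ x, f x = QuotientGroup.mk (gg x) := fun x =>
      (QuotientGroup.out_eq' (f x)).symm
    set Hmap : X × unitInterval → G ⧸ K :=
      fun p => gg p.1 • Fhat (⟨(p.1, gg p.1), hggp p.1⟩, p.2) with hHmap
    -- quotient map
    have hq : IsQuotientMap (fun p :
        {p : X × G // f p.1 = QuotientGroup.mk p.2} × unitInterval =>
        (p.1.1.1, p.2)) := by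
      have hopen : IsOpenMap (fun p :
          {p : X × G // f p.1 = QuotientGroup.mk p.2} × unitInterval =>
          (p.1.1.1, p.2)) :=
        (aux_isOpenMap_q K f).prodMap IsOpenMap.id
      refine hopen.isQuotientMap ?_ ?_
      · exact ((continuous_subtype_val.comp continuous_fst).fst).prodMk continuous_snd
      · rintro ⟨x, t⟩
        exact ⟨⟨⟨(x, gg x), hggp x⟩, t⟩, rfl⟩
    have hHcont : Continuous Hmap := by
      rw [hq.continuous_iff]
      have : (Hmap ∘ fun p :
          {p : X × G // f p.1 = QuotientGroup.mk p.2} × unitInterval =>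
          (p.1.1.1, p.2)) = fun p => p.1.1.2 • Fhat p := by
        funext ⟨⟨⟨x, g⟩, hx⟩, t⟩
        exact hwd x (gg x) g (hggp x) hx t
      rw [this]
      exact ((continuous_subtype_val.comp continuous_fst).snd).smul hcont
    have hH0 : ∀ x, Hmap (x, 0) = h x := by
      intro x
      simp only [hHmap]
      rw [h0, hη]
      simp only [smul_smul]
      simp
    refine ⟨⟨fun x => Hmap (x, 1), hHcont.comp (Continuous.prodMk continuous_id continuous_const)⟩,
      ⟨ContinuousMap.Homotopy.mk
        ⟨fun p => Hmap (p.2, p.1), hHcont.comp (continuous_snd.prodMk continuous_fst)⟩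
        (fun x => hH0 x) (fun x => rfl)⟩, ?_⟩
    · intro x hcon
      apply h1 ⟨(x, gg x), hggp x⟩
      have hcon' : f x = Hmap (x, 1) := hcon
      have hmk : (QuotientGroup.mk (gg x) : G ⧸ K)
          = gg x • Fhat (⟨(x, gg x), hggp x⟩, 1) := (hggp x).symm.trans hcon'
      calc Fhat (⟨(x, gg x), hggp x⟩, 1)
          = (gg x)⁻¹ • (gg x • Fhat (⟨(x, gg x), hggp x⟩, 1)) := by
            rw [smul_smul]; simp
        _ = (gg x)⁻¹ • (QuotientGroup.mk (gg x) : G ⧸ K) := by rw [← hmk]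
        _ = QuotientGroup.mk (1 : G) := by simp
end

section
/- Let $x_1, x_2 \in \mathrm{Coin}(f,h)$. Then there exists a path $\gamma$ in $X$ from $x_1$ to $x_2$ such that $f \circ \gamma$ and $h \circ \gamma$ are homotopic relative to endpoints (i.e. $x_1$ and $x_2$ are Nielsen equivalent coincidences of $(f,h)$) if and only if there exists a path $\gamma'$ in $X$ from $x_1$ to $x_2$ such that the loop $\eta \circ \gamma'$ at $eK$ is homotopic relative to endpoints to the constant path at $eK$ (i.e. $x_1$ and $x_2$ are Nielsen equivalent roots of $\eta$ at $eK$). -/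
open unitInterval

lemma smul_homotopicRel {Y G : Type*} [TopologicalSpace Y] [Group G] [TopologicalSpace G]
    [IsTopologicalGroup G] {K : Subgroup G}
    (a : C(Y, G)) {u v : C(Y, G ⧸ K)} {S : Set Y}
    (H : u.HomotopicRel v S) :
    ContinuousMap.HomotopicRel
      ⟨fun y => a y • u y, (a.continuous.smul u.continuous)⟩
      ⟨fun y => a y • v y, (a.continuous.smul v.continuous)⟩ S := by
  obtain ⟨F⟩ := H
  exact ⟨{ toFun := fun p => a p.2 • F p
           continuous_toFun := ((a.continuous.comp continuous_snd).smul F.continuous)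
           map_zero_left := fun y => by simp
           map_one_left := fun y => by simp
           prop' := fun t y hy => by simp [F.eq_fst t hy] }⟩

/-- Given a continuous lift `f̂` of `f` and `η x = (f̂ x)⁻¹ • h x`, two
coincidence points `x₁, x₂` of `(f, h)` are Nielsen equivalent as coincidences (some path
`γ` from `x₁` to `x₂` has `f ∘ γ ≃ h ∘ γ` rel endpoints) iff they are Nielsen equivalent
as roots of `η` at `eK` (some path `γ'` from `x₁` to `x₂` has `η ∘ γ'` homotopic rel
endpoints to the constant path at `eK`). -/
theorem nielsen_coincidence_iff_nielsen_root
    {X : Type*} [TopologicalSpace X]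
    {G : Type*} [Group G] [TopologicalSpace G] [IsTopologicalGroup G]
    (K : Subgroup G) (hK : IsClosed (K : Set G))
    (f h : C(X, G ⧸ K))
    (fhat : C(X, G)) (hlift : ∀ x, QuotientGroup.mk (fhat x) = f x)
    (η : C(X, G ⧸ K)) (hη : ∀ x, η x = (fhat x)⁻¹ • h x)
    (x₁ x₂ : X) (hx₁ : f x₁ = h x₁) (hx₂ : f x₂ = h x₂) :
    (∃ γ : C(unitInterval, X), γ 0 = x₁ ∧ γ 1 = x₂ ∧
      (f.comp γ).HomotopicRel (h.comp γ) {0, 1}) ↔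
    (∃ γ' : C(unitInterval, X), γ' 0 = x₁ ∧ γ' 1 = x₂ ∧
      (η.comp γ').HomotopicRel
        (ContinuousMap.const unitInterval (QuotientGroup.mk (1 : G))) {0, 1}) := by
  constructor
  · rintro ⟨γ, h0, h1, H⟩
    refine ⟨γ, h0, h1, ?_⟩
    have H' := smul_homotopicRel (K := K)
      (⟨fun t => (fhat (γ t))⁻¹, (fhat.continuous.comp γ.continuous).inv⟩) H
    have goal := H'.symm
    convert goal using 2
    · ext t
      simp only [ContinuousMap.toFun_eq_coe, ContinuousMap.coe_mk, ContinuousMap.comp_apply, hη]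
    · ext t
      simp only [ContinuousMap.toFun_eq_coe, ContinuousMap.coe_mk, ContinuousMap.comp_apply, ContinuousMap.const_apply,
        ← hlift (γ t), MulAction.Quotient.smul_mk]
      simp
  · rintro ⟨γ, h0, h1, H⟩
    refine ⟨γ, h0, h1, ?_⟩
    have H' := smul_homotopicRel (K := K) (fhat.comp γ) H
    have goal := H'.symm
    convert goal using 2
    · ext t
      simp only [ContinuousMap.toFun_eq_coe, ContinuousMap.coe_mk, ContinuousMap.comp_apply, ContinuousMap.const_apply,
        show ((1 : G) : G ⧸ K) = QuotientGroup.mk 1 from rfl, MulAction.Quotient.smul_mk]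
      simp [hlift (γ t)]
    · ext t
      simp [ContinuousMap.toFun_eq_coe, hη]
end

section
/- There exists a continuous map $h' : X \to G/K$ homotopic to $h$ with $f(x) \neq h'(x)$ for all $x \in X$ if and only if there exists a continuous map $\eta' : X \to G/K$ homotopic to $\eta$ with $\eta'(x) \neq eK$ for all $x \in X$ (i.e. the pair $(f,h)$ can be made coincidence free by a homotopy of $h$ if and only if $\eta$ can be made root free with respect to $eK$ by a homotopy). -/
/-- Twisting a map `X → G ⧸ K` by a continuous family of group elements. -/
private def twistMap {X : Type*} [TopologicalSpace X]
    {G : Type*} [Group G] [TopologicalSpace G] [IsTopologicalGroup G]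
    {K : Subgroup G} (c : C(X, G)) (a : C(X, G ⧸ K)) : C(X, G ⧸ K) :=
  ⟨fun x => c x • a x, by continuity⟩

private lemma twist_homotopic {X : Type*} [TopologicalSpace X]
    {G : Type*} [Group G] [TopologicalSpace G] [IsTopologicalGroup G]
    {K : Subgroup G} (c : C(X, G)) {a b : C(X, G ⧸ K)}
    (hab : a.Homotopic b) : (twistMap c a).Homotopic (twistMap c b) := by
  obtain ⟨H⟩ := hab
  refine ⟨⟨⟨fun p => c p.2 • H p, by continuity⟩, ?_, ?_⟩⟩
  · intro x; simp [twistMap]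
  · intro x; simp [twistMap]

/-- Given a continuous lift `f̂` of `f` and `η x = (f̂ x)⁻¹ • h x`, the pair
`(f, h)` can be deformed coincidence free by a homotopy of `h` iff `η` can be deformed root
free with respect to `eK` by a homotopy. -/
theorem coincidence_free_iff_root_free_of_lift
    {X : Type*} [TopologicalSpace X]
    {G : Type*} [Group G] [TopologicalSpace G] [IsTopologicalGroup G]
    (K : Subgroup G) (hK : IsClosed (K : Set G))
    (f h : C(X, G ⧸ K))
    (fhat : C(X, G)) (hlift : ∀ x, QuotientGroup.mk (fhat x) = f x)
    (η : C(X, G ⧸ K)) (hη : ∀ x, η x = (fhat x)⁻¹ • h x) :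
    (∃ h' : C(X, G ⧸ K), h.Homotopic h' ∧ ∀ x, f x ≠ h' x) ↔
    (∃ η' : C(X, G ⧸ K), η.Homotopic η' ∧ ∀ x, η' x ≠ QuotientGroup.mk (1 : G)) := by
  have hkey : ∀ x (y : G ⧸ K), f x = (fhat x) • y ↔ y = QuotientGroup.mk (1 : G) := by
    intro x y
    have h1 : f x = fhat x • (QuotientGroup.mk (1 : G) : G ⧸ K) := by
      rw [← hlift x, MulAction.Quotient.smul_mk, smul_eq_mul, mul_one]
    rw [h1, smul_left_cancel_iff, eq_comm]
  constructor
  · rintro ⟨h', ⟨hh, hne⟩⟩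
    refine ⟨twistMap (fhat.comp (ContinuousMap.id X))⁻¹ h', ?_, ?_⟩
    · have : η = twistMap (fhat.comp (ContinuousMap.id X))⁻¹ h := by
        ext x; simp [twistMap, hη x]
      rw [this]
      exact twist_homotopic _ hh
    · intro x hx
      apply hne x
      simp only [twistMap, ContinuousMap.coe_mk, ContinuousMap.inv_apply,
        ContinuousMap.comp_apply, ContinuousMap.id_apply] at hx
      have := (hkey x ((fhat x)⁻¹ • h' x)).mpr hx
      simpa using this
  · rintro ⟨η', ⟨hh, hne⟩⟩
    refine ⟨twistMap (fhat.comp (ContinuousMap.id X)) η', ?_, ?_⟩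
    · have : h = twistMap (fhat.comp (ContinuousMap.id X)) η := by
        ext x; simp [twistMap, hη x]
      rw [this]
      exact twist_homotopic _ hh
    · intro x hx
      apply hne x
      simp only [twistMap, ContinuousMap.coe_mk, ContinuousMap.comp_apply,
        ContinuousMap.id_apply] at hx
      exact (hkey x (η' x)).mp hx
end

section
/- Let $X$ be a topological space, $f, h : X \to M$ continuous maps, and define $\eta : X \to M$ by $\eta(x) = \theta(f(x), h(x))$. Then there exists a continuous map $h' : X \to M$ homotopic to $h$ with $f(x) \neq h'(x)$ for all $x \in X$ if and only if there exists a continuous map $\eta' : X \to M$ homotopic to $\eta$ with $\eta'(x) \neq e$ for all $x \in X$. -/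
/-- Let `M` be a space with a point `e` and continuous `θ, θ' : M × M → M`
with `θ (x, x) = e`, `θ' (x, θ (x, y)) = y` and `θ (x, θ' (x, y)) = y` (a suitable manifold:
each `θ (x, ·)` is a homeomorphism with jointly continuous inverse). For continuous
`f, h : X → M` and `η x = θ (f x, h x)`, the pair `(f, h)` can be made coincidence free by a
homotopy of `h` iff `η` can be made root free with respect to `e` by a homotopy. -/
theorem coincidence_free_iff_root_free_suitable
    {M : Type*} [TopologicalSpace M] (e : M)
    (θ : C(M × M, M)) (hθ : ∀ x : M, θ (x, x) = e)
    (θ' : C(M × M, M))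
    (hθ'₁ : ∀ x y : M, θ' (x, θ (x, y)) = y)
    (hθ'₂ : ∀ x y : M, θ (x, θ' (x, y)) = y)
    {X : Type*} [TopologicalSpace X] (f h : C(X, M))
    (η : C(X, M)) (hη : ∀ x, η x = θ (f x, h x)) :
    (∃ h' : C(X, M), h.Homotopic h' ∧ ∀ x, f x ≠ h' x) ↔
    (∃ η' : C(X, M), η.Homotopic η' ∧ ∀ x, η' x ≠ e) := by
  constructor
  · rintro ⟨h', ⟨H⟩, hfree⟩
    refine ⟨⟨fun x => θ (f x, h' x), by fun_prop⟩, ⟨⟨⟨fun p => θ (f p.2, H p),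
        by fun_prop⟩, ?_, ?_⟩⟩, ?_⟩
    · intro x; simp [hη x]
    · intro x; simp
    · intro x hx
      simp only [ContinuousMap.coe_mk] at hx
      apply hfree x
      have : θ' (f x, θ (f x, h' x)) = θ' (f x, θ (f x, f x)) := by rw [hx, hθ]
      rwa [hθ'₁, hθ'₁, eq_comm] at this
  · rintro ⟨η', ⟨G⟩, hfree⟩
    refine ⟨⟨fun x => θ' (f x, η' x), by fun_prop⟩, ⟨⟨⟨fun p => θ' (f p.2, G p),
        by fun_prop⟩, ?_, ?_⟩⟩, ?_⟩
    · intro x; simp [hη x, hθ'₁]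
    · intro x; simp
    · intro x hx
      simp only [ContinuousMap.coe_mk] at hx
      apply hfree x
      have := hθ'₂ (f x) (η' x)
      rw [← hx] at this
      rw [← this, hθ]
end

section
/- Let $X$ be a topological space, $f, h : X \to M$ continuous maps, define $\eta : X \to M$ by $\eta(x) = \theta(f(x), h(x))$, and let $x_1, x_2 \in \mathrm{Coin}(f,h)$. Then there exists a path $\gamma$ in $X$ from $x_1$ to $x_2$ such that $f \circ \gamma$ and $h \circ \gamma$ are homotopic relative to endpoints if and only if there exists a path $\gamma'$ in $X$ from $x_1$ to $x_2$ such that the loop $\eta \circ \gamma'$ at $e$ is homotopic relative to endpoints to the constant path at $e$; in particular, there is a bijection between the Nielsen coincidence classes of $(f,h)$ and the Nielsen root classes of $\eta$ at $e$. -/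
open unitInterval

/-- Let `M` be a space with a point `e` and continuous `θ, θ' : M × M → M`
with `θ (x, x) = e`, `θ' (x, θ (x, y)) = y` and `θ (x, θ' (x, y)) = y` (a suitable
manifold). For continuous `f, h : X → M`, `η x = θ (f x, h x)`, and coincidence points
`x₁, x₂` of `(f, h)`: there is a path `γ` from `x₁` to `x₂` with `f ∘ γ ≃ h ∘ γ` rel
endpoints iff there is a path `γ'` from `x₁` to `x₂` with `η ∘ γ'` homotopic rel endpoints
to the constant path at `e`; this gives the bijection between Nielsen coincidence classes
of `(f, h)` and Nielsen root classes of `η` at `e`. -/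
theorem nielsen_coincidence_iff_nielsen_root_suitable
    {M : Type*} [TopologicalSpace M] (e : M)
    (θ : C(M × M, M)) (hθ : ∀ x : M, θ (x, x) = e)
    (θ' : C(M × M, M))
    (hθ'₁ : ∀ x y : M, θ' (x, θ (x, y)) = y)
    (hθ'₂ : ∀ x y : M, θ (x, θ' (x, y)) = y)
    {X : Type*} [TopologicalSpace X] (f h : C(X, M))
    (η : C(X, M)) (hη : ∀ x, η x = θ (f x, h x))
    (x₁ x₂ : X) (hx₁ : f x₁ = h x₁) (hx₂ : f x₂ = h x₂) :
    (∃ γ : C(unitInterval, X), γ 0 = x₁ ∧ γ 1 = x₂ ∧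
      (f.comp γ).HomotopicRel (h.comp γ) {0, 1}) ↔
    (∃ γ' : C(unitInterval, X), γ' 0 = x₁ ∧ γ' 1 = x₂ ∧
      (η.comp γ').HomotopicRel (ContinuousMap.const unitInterval e) {0, 1}) := by

  constructor
  · rintro ⟨γ, hγ0, hγ1, ⟨H⟩⟩
    refine ⟨γ, hγ0, hγ1, ⟨⟨⟨⟨fun p => θ (f (γ p.2), H (unitInterval.symm p.1, p.2)), ?_⟩,
      ?_, ?_⟩, ?_⟩⟩⟩
    · exact θ.continuous.comp ((f.continuous.comp (γ.continuous.comp continuous_snd)).prodMk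
        (H.continuous.comp ((unitInterval.continuous_symm.comp continuous_fst).prodMk
          continuous_snd)))
    · intro s
      simp [hη]
    · intro s
      simp [hθ]
    · intro t s hs
      have hc : f (γ s) = h (γ s) := by
        rcases hs with hs | hs <;> subst hs <;> simp [hγ0, hγ1, hx₁, hx₂]
      have := H.eq_fst t hs
      simp only [ContinuousMap.Homotopy.curry_apply] at this ⊢
      simp [ContinuousMap.HomotopyWith.coe_toContinuousMap] at this ⊢
      rw [show H (unitInterval.symm t, s) = f.comp γ s from H.eq_fst _ hs]
      simp [hη, ContinuousMap.comp_apply, ← hc, hθ]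
  · rintro ⟨γ, hγ0, hγ1, ⟨K⟩⟩
    refine ⟨γ, hγ0, hγ1, ?_⟩
    have hH : (h.comp γ).HomotopicRel (f.comp γ) {0, 1} := by
      refine ⟨⟨⟨⟨fun p => θ' (f (γ p.2), K p), ?_⟩, ?_, ?_⟩, ?_⟩⟩
      · exact θ'.continuous.comp ((f.continuous.comp (γ.continuous.comp continuous_snd)).prodMk
          K.continuous)
      · intro s
        simp [hη, hθ'₁]
      · intro s
        have : θ' (f (γ s), e) = f (γ s) := by rw [← hθ (f (γ s)), hθ'₁]
        simpa using this
      · intro t s hs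
        have hc : f (γ s) = h (γ s) := by
          rcases hs with hs | hs <;> subst hs <;> simp [hγ0, hγ1, hx₁, hx₂]
        have hKe : K (t, s) = e := by
          have := K.eq_snd t hs
          simpa using this
        simp only [ContinuousMap.Homotopy.curry_apply]
        simp [hKe]
        rw [show (e : M) = θ (f (γ s), h (γ s)) by rw [← hc, hθ], hθ'₁]
    exact hH.symm
end
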